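/- Fix an enumeration u₁, …, u₃₃ of the rays of the Peres set PS, and for each i let vᵢ ∈ ℂ³ be (the complexification of) a unit vector spanning uᵢ. Let Pᵢ^{green} be the orthogonal projection of ℂ³ onto the complex line spanned by vᵢ and Pᵢ^{red} = id − Pᵢ^{green}. For a colouring γ of PS define the operator T(γ) = P₃₃^{γ(u₃₃)} ∘ ⋯ ∘ P₂^{γ(u₂)} ∘ P₁^{γ(u₁)}, and for ψ ∈ ℂ³ and A ⊆ Ω define μ(A) = ‖ Σ_{γ ∈ A} T(γ)ψ ‖². Then for every ψ ∈ ℂ³, μ(A) = 0 whenever A is a PKS event, and μ(A) = 0 whenever A is a union of pairwise disjoint PKS events. -/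

import Mathlib

noncomputable section

/-- Vectors in `ℝ³`. -/
abbrev V3 : Type := Fin 3 → ℝ

/-- The standard inner product on `ℝ³`. -/
def dot3 (x y : V3) : ℝ := x 0 * y 0 + x 1 * y 1 + x 2 * y 2

/-- The multiset of absolute values of the coordinates of a vector in `ℝ³`. -/
def absCoords (x : V3) : Multiset ℝ := {|x 0|, |x 1|, |x 2|}

/-- The Peres set `PS`: the 33 rays (1-dimensional linear subspaces) of `ℝ³` spanned by
nonzero vectors whose multiset of absolute values of coordinates is one of
`{0,0,1}`, `{0,1,1}`, `{0,1,2}`, `{1,1,2}`. -/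
def PeresSet : Set (Submodule ℝ V3) :=
  {L | ∃ v : V3, v ≠ 0 ∧ L = Submodule.span ℝ {v} ∧
    (absCoords v = {0, 0, 1} ∨ absCoords v = {0, 1, 1} ∨
      absCoords v = {0, 1, 2} ∨ absCoords v = {1, 1, 2})}

/-- Two rays are orthogonal if their elements are orthogonal for the standard
inner product on `ℝ³`. -/
def RayOrtho (L M : Submodule ℝ V3) : Prop := ∀ x ∈ L, ∀ y ∈ M, dot3 x y = 0

/-- Three mutually orthogonal rays. -/
def MutuallyOrtho (L M N : Submodule ℝ V3) : Prop :=
  RayOrtho L M ∧ RayOrtho L N ∧ RayOrtho M N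

/-- The two colours. -/
inductive Colour : Type
  | green
  | red
deriving DecidableEq

/-- A colouring of the Peres set. -/
def Colouring : Type := {L : Submodule ℝ V3 // L ∈ PeresSet} → Colour

/-- The PKS events: subsets of the space `Ω` of colourings of the form
`R_B` (all three rays of a triple `B` of mutually orthogonal rays of `PS` coloured red)
or `G_P` (both rays of an orthogonal pair `P` in `PS` coloured green). -/
def IsPKSEvent (E : Set Colouring) : Prop :=
  (∃ u v w : {L : Submodule ℝ V3 // L ∈ PeresSet}, MutuallyOrtho u.1 v.1 w.1 ∧
      E = {γ : Colouring | γ u = Colour.red ∧ γ v = Colour.red ∧ γ w = Colour.red}) ∨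
  (∃ u v : {L : Submodule ℝ V3 // L ∈ PeresSet}, RayOrtho u.1 v.1 ∧
      E = {γ : Colouring | γ u = Colour.green ∧ γ v = Colour.green})

/-- The multiplicative co-event `A*` with support `A`: `A*(B) = 1` iff `A ⊆ B`. -/
def coevent (A : Set Colouring) : Set Colouring → ZMod 2 :=
  open scoped Classical in fun B => if A ⊆ B then 1 else 0

/-- The orthogonal projection of `ℂ³` onto the complex line spanned by `x`,
as an operator on `ℂ³`. -/
def lineProj (x : EuclideanSpace ℂ (Fin 3)) :
    EuclideanSpace ℂ (Fin 3) →L[ℂ] EuclideanSpace ℂ (Fin 3) :=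
  (ℂ ∙ x).subtypeL.comp (Submodule.orthogonalProjectionOnto (ℂ ∙ x))

/-- `P^{green}` is the projection onto the line spanned by `x`; `P^{red} = id − P^{green}`. -/
def colourProj (x : EuclideanSpace ℂ (Fin 3)) :
    Colour → (EuclideanSpace ℂ (Fin 3) →L[ℂ] EuclideanSpace ℂ (Fin 3))
  | Colour.green => lineProj x
  | Colour.red => 1 - lineProj x

/-- The class operator `T(γ) = P₃₃^{γ(u₃₃)} ∘ ⋯ ∘ P₂^{γ(u₂)} ∘ P₁^{γ(u₁)}` of a
colouring `γ`, for an enumeration `u` of the Peres set with unit spanning vectors `v`. -/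
def classOp (u : Fin 33 → {L : Submodule ℝ V3 // L ∈ PeresSet})
    (v : Fin 33 → EuclideanSpace ℂ (Fin 3)) (γ : Colouring) :
    EuclideanSpace ℂ (Fin 3) →L[ℂ] EuclideanSpace ℂ (Fin 3) :=
  (List.ofFn fun i : Fin 33 => colourProj (v i) (γ (u i))).reverse.prod

/-- The quantal measure `μ(A) = ‖Σ_{γ ∈ A} T(γ)ψ‖²` of an event `A ⊆ Ω`. -/
def quantalMeasure (u : Fin 33 → {L : Submodule ℝ V3 // L ∈ PeresSet})
    (v : Fin 33 → EuclideanSpace ℂ (Fin 3)) (ψ : EuclideanSpace ℂ (Fin 3))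
    (A : Set Colouring) : ℝ :=
  ‖∑ᶠ γ ∈ A, classOp u v γ ψ‖ ^ 2

/-! Fixing the colours of some rays and summing `T(γ)` over the colours of all other rays
replaces every free factor by `P^green + P^red = 1`. For a PKS event the sum of `T(γ)` is
therefore an ordered product in which only the projections attached to two or three mutually
orthogonal rays are nontrivial. These commute, and `P_a P_b = 0` for an orthogonal pair while
`(1 - P_a)(1 - P_b)(1 - P_c) = 0` for an orthogonal triple, which spans `ℂ³`. Hence
`Σ_{γ ∈ A} T(γ) ψ = 0` for every PKS event `A`, and by additivity also for disjoint unions. -/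
open scoped ComplexInnerProductSpace
open Finset Fintype Function

theorem List.prod_eq_zero_of_subperm {M : Type*} [MonoidWithZero M] {l l' : List M}
    (hc : l.Pairwise Commute) (h : l'.Subperm l) (h0 : l'.prod = 0) : l.prod = 0 := by
  obtain ⟨l'', hperm, hsub⟩ := h
  obtain ⟨r, hr⟩ := hsub.exists_perm_append
  rw [hr.prod_eq' hc, List.prod_append, (hperm.prod_eq' (hc.sublist hsub)), h0, zero_mul]

theorem sum_piFinset_ofFn_reverse_prod {M β : Type*} [Semiring M] [DecidableEq β] :
    ∀ {n : ℕ} (t : Fin n → Finset β) (A : Fin n → β → M),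
      ∑ g ∈ piFinset t, (List.ofFn fun i => A i (g i)).reverse.prod =
        (List.ofFn fun i => ∑ b ∈ t i, A i b).reverse.prod
  | 0, t, A => by simp
  | n + 1, t, A => by
    have hsplit :
        piFinset t = (t 0 ×ˢ piFinset (Fin.tail t)).map (Fin.consEquiv _).toEmbedding := by
      simpa using Finset.filter_piFinset_eq_map_consEquiv t (fun _ => True)
    simp only [hsplit, sum_map, sum_product, List.ofFn_succ, List.reverse_cons, List.prod_append,
      List.prod_singleton, Equiv.coe_toEmbedding, Fin.consEquiv_apply, Fin.cons_succ, Fin.cons_zero]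
    rw [← sum_piFinset_ofFn_reverse_prod (fun i => t i.succ) (fun i => A i.succ),
      Finset.sum_mul_sum, sum_comm]
    rfl

instance : Fintype Colour := ⟨{Colour.green, Colour.red}, fun c => by cases c <;> simp⟩

local notation "ℂ³" => EuclideanSpace ℂ (Fin 3)

theorem lineProj_apply_of_norm_eq_one {x : ℂ³} (hx : ‖x‖ = 1) (y : ℂ³) :
    lineProj x y = ⟪x, y⟫ • x :=
  Submodule.starProjection_unit_singleton ℂ hx y

theorem lineProj_mul_lineProj_of_inner_eq_zero {x y : ℂ³} (h : ⟪x, y⟫ = 0) :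
    lineProj x * lineProj y = 0 := by
  ext1 z
  change (ℂ ∙ x).starProjection ((ℂ ∙ y).starProjection z) = 0
  simp [Submodule.starProjection_singleton, h]

theorem commute_colourProj_of_inner_eq_zero {x y : ℂ³} (h : ⟪x, y⟫ = 0) (c c' : Colour) :
    Commute (colourProj x c) (colourProj y c') := by
  have hP : Commute (lineProj x) (lineProj y) := by
    rw [Commute, SemiconjBy, lineProj_mul_lineProj_of_inner_eq_zero h,
      lineProj_mul_lineProj_of_inner_eq_zero (inner_eq_zero_symm.mp h)]
  cases c <;> cases c'
  · exact hP
  · exact (Commute.one_right _).sub_right hP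
  · exact (Commute.one_left _).sub_left hP
  · exact (Commute.one_left _).sub_left ((Commute.one_right _).sub_right hP)

theorem sum_colourProj (x : ℂ³) : ∑ c, colourProj x c = 1 := by
  rw [show (univ : Finset Colour) = {Colour.green, Colour.red} from rfl, sum_pair (by decide)]
  exact add_sub_cancel (lineProj x) 1

theorem sum_lineProj_of_orthonormal {b : Fin 3 → ℂ³} (hb : Orthonormal ℂ b) :
    ∑ i, lineProj (b i) = 1 := by
  let B :=
    OrthonormalBasis.mk hb (hb.linearIndependent.span_eq_top_of_card_eq_finrank (by simp)).ge
  ext1 ψ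
  simpa [lineProj_apply_of_norm_eq_one (hb.1 _), B] using B.sum_repr' ψ

theorem one_sub_lineProj_mul_eq_zero_of_orthonormal {b : Fin 3 → ℂ³} (hb : Orthonormal ℂ b) :
    (1 - lineProj (b 0)) * ((1 - lineProj (b 1)) * (1 - lineProj (b 2))) = 0 := by
  have hsum := sum_lineProj_of_orthonormal hb
  rw [Fin.sum_univ_three] at hsum
  have hP : ∀ i j, i ≠ j → lineProj (b i) * lineProj (b j) = 0 := fun i j hij =>
    lineProj_mul_lineProj_of_inner_eq_zero (hb.2 hij)
  have h₀ : 1 - lineProj (b 0) = lineProj (b 1) + lineProj (b 2) := by rw [← hsum]; abel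
  have h₁₂ : (1 - lineProj (b 1)) * (1 - lineProj (b 2)) = lineProj (b 0) := by
    simp only [sub_mul, mul_sub, one_mul, mul_one, hP 1 2 (by decide)]
    rw [← hsum]
    abel
  rw [h₀, h₁₂, add_mul, hP 1 0 (by decide), hP 2 0 (by decide), add_zero]

theorem inner_eq_dot3 {x y : ℂ³} {w w' : V3} (hx : ∀ j, x j = (w j : ℂ))
    (hy : ∀ j, y j = (w' j : ℂ)) : ⟪x, y⟫ = (dot3 w w' : ℂ) := by
  simp only [PiLp.inner_apply, RCLike.inner_apply, Fin.sum_univ_three, hx, hy, dot3,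
    Complex.conj_ofReal, Complex.ofReal_add, Complex.ofReal_mul]
  ring

theorem RayOrtho.symm {L M : Submodule ℝ V3} (h : RayOrtho L M) : RayOrtho M L := by
  intro x hx y hy
  rw [dot3, ← h y hy x hx, dot3]
  ring

theorem RayOrtho.dot3_eq_zero {w w' : V3} (h : RayOrtho (ℝ ∙ w) (ℝ ∙ w')) : dot3 w w' = 0 :=
  h w (Submodule.mem_span_singleton_self w) w' (Submodule.mem_span_singleton_self w')

local notation "PS" => {L : Submodule ℝ V3 // L ∈ PeresSet}

def colouredOn (s : Set PS) (c : Colour) : Set Colouring := {γ | ∀ x ∈ s, γ x = c}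

section Enumeration

variable {u : Fin 33 → PS} {v : Fin 33 → ℂ³}

def colouringEquiv (hu : Bijective u) : (Fin 33 → Colour) ≃ Colouring :=
  (Equiv.ofBijective u hu).arrowCongr (Equiv.refl Colour)

theorem colouringEquiv_apply_apply (hu : Bijective u) (g : Fin 33 → Colour) (i : Fin 33) :
    colouringEquiv hu g (u i) = g i :=
  congrArg g ((Equiv.ofBijective u hu).symm_apply_apply i)

theorem classOp_colouringEquiv (hu : Bijective u) (g : Fin 33 → Colour) :
    classOp u v (colouringEquiv hu g) =
      (List.ofFn fun i => colourProj (v i) (g i)).reverse.prod := by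
  simp only [classOp, colouringEquiv_apply_apply]

open Classical in
theorem finsum_classOp_apply_colouredOn (hu : Bijective u) (s : Set PS) (c : Colour)
    (ψ : ℂ³) :
    ∑ᶠ γ ∈ colouredOn s c, classOp u v γ ψ =
      (List.ofFn fun i => if u i ∈ s then colourProj (v i) c else 1).reverse.prod ψ := by
  set e := colouringEquiv hu
  have hpre : e ⁻¹' colouredOn s c = ↑(piFinset fun i => if u i ∈ s then {c} else univ) := by
    ext g
    simp only [Set.mem_preimage, colouredOn, Set.mem_ofPred_eq, coe_piFinset, Set.mem_pi,
      Set.mem_univ, true_implies, hu.surjective.forall, e, colouringEquiv_apply_apply]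
    refine forall_congr' fun i => ?_
    split_ifs <;> simp [*]
  rw [← e.image_preimage (colouredOn s c), finsum_mem_image e.injective.injOn, hpre,
    finsum_mem_coe_finset]
  simp_rw [e, classOp_colouringEquiv, ← _root_.sum_apply, sum_piFinset_ofFn_reverse_prod]
  congr
  funext i
  split_ifs <;> simp [sum_colourProj]

theorem finsum_classOp_apply_colouredOn_eq_zero (hu : Bijective u)
    (horth : ∀ i j, RayOrtho (u i).1 (u j).1 → ⟪v i, v j⟫ = 0) {s : Set PS}
    (hs : s.Pairwise fun x y => RayOrtho x.1 y.1) {c : Colour} {l : List (Fin 33)}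
    (hl : l.Nodup) (hls : ∀ i ∈ l, u i ∈ s) (h0 : (l.map fun i => colourProj (v i) c).prod = 0)
    (ψ : ℂ³) : ∑ᶠ γ ∈ colouredOn s c, classOp u v γ ψ = 0 := by
  classical
  rw [finsum_classOp_apply_colouredOn hu]
  set Q : Fin 33 → ℂ³ →L[ℂ] ℂ³ := fun i => if u i ∈ s then colourProj (v i) c else 1
  have hQ : ∀ i j, Commute (Q i) (Q j) := by
    intro i j
    rcases eq_or_ne i j with rfl | hij
    · exact Commute.refl _
    by_cases hi : u i ∈ s
    · by_cases hj : u j ∈ s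
      · simp only [Q, if_pos hi, if_pos hj]
        exact commute_colourProj_of_inner_eq_zero (horth i j (hs hi hj (hu.1.ne hij))) c c
      · simp only [Q, if_neg hj]
        exact Commute.one_right _
    · simp only [Q, if_neg hi]
      exact Commute.one_left _
  suffices (List.ofFn Q).reverse.prod = 0 by rw [this, zero_apply]
  refine List.prod_eq_zero_of_subperm (l' := l.map Q) ?_ ?_ ?_
  · refine List.pairwise_of_forall_mem_list fun x hx y hy => ?_
    simp only [List.mem_reverse, List.mem_ofFn] at hx hy
    obtain ⟨i, rfl⟩ := hx
    obtain ⟨j, rfl⟩ := hy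
    exact hQ i j
  · rw [List.ofFn_eq_map, ← List.map_reverse]
    obtain ⟨l'', hperm, hsub⟩ := hl.subperm fun i _ => List.mem_reverse.mpr (List.mem_finRange i)
    exact ⟨l''.map Q, hperm.map Q, hsub.map Q⟩
  · rwa [List.map_congr_left fun i hi => if_pos (hls i hi)]

theorem ne_of_rayOrtho (hunit : ∀ i, ‖v i‖ = 1)
    (horth : ∀ i j, RayOrtho (u i).1 (u j).1 → ⟪v i, v j⟫ = 0) {i j : Fin 33}
    (h : RayOrtho (u i).1 (u j).1) : i ≠ j := by
  rintro rfl
  have := horth i i h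
  rw [inner_self_eq_zero, ← norm_eq_zero, hunit i] at this
  exact one_ne_zero this

theorem finsum_classOp_apply_colouredOn_red_eq_zero (hu : Bijective u) (hunit : ∀ i, ‖v i‖ = 1)
    (horth : ∀ i j, RayOrtho (u i).1 (u j).1 → ⟪v i, v j⟫ = 0) {i j k : Fin 33}
    (hij : RayOrtho (u i).1 (u j).1) (hik : RayOrtho (u i).1 (u k).1)
    (hjk : RayOrtho (u j).1 (u k).1) (ψ : ℂ³) :
    ∑ᶠ γ ∈ colouredOn {u i, u j, u k} .red, classOp u v γ ψ = 0 := by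
  have hb : Orthonormal ℂ ![v i, v j, v k] := by
    simp [orthonormal_vecCons_iff, Fin.forall_fin_succ, hunit, horth _ _ hij, horth _ _ hik,
      horth _ _ hjk]
  refine finsum_classOp_apply_colouredOn_eq_zero hu horth ?_ (l := [i, j, k]) ?_ (by simp) ?_ ψ
  · simp [Set.pairwise_insert, hij, hik, hjk, hij.symm, hik.symm, hjk.symm]
  · simp [ne_of_rayOrtho hunit horth hij, ne_of_rayOrtho hunit horth hik,
      ne_of_rayOrtho hunit horth hjk]
  · simpa [colourProj] using one_sub_lineProj_mul_eq_zero_of_orthonormal hb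

theorem finsum_classOp_apply_colouredOn_green_eq_zero (hu : Bijective u)
    (hunit : ∀ i, ‖v i‖ = 1) (horth : ∀ i j, RayOrtho (u i).1 (u j).1 → ⟪v i, v j⟫ = 0)
    {i j : Fin 33} (hij : RayOrtho (u i).1 (u j).1) (ψ : ℂ³) :
    ∑ᶠ γ ∈ colouredOn {u i, u j} .green, classOp u v γ ψ = 0 := by
  refine finsum_classOp_apply_colouredOn_eq_zero hu horth ?_ (l := [i, j]) ?_ (by simp) ?_ ψ
  · simp [Set.pairwise_insert, hij, hij.symm]
  · simp [ne_of_rayOrtho hunit horth hij]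
  · simpa [colourProj] using lineProj_mul_lineProj_of_inner_eq_zero (horth _ _ hij)

theorem finsum_classOp_apply_eq_zero_of_isPKSEvent (hu : Bijective u)
    (hunit : ∀ i, ‖v i‖ = 1) (horth : ∀ i j, RayOrtho (u i).1 (u j).1 → ⟪v i, v j⟫ = 0)
    {E : Set Colouring} (hE : IsPKSEvent E) (ψ : ℂ³) : ∑ᶠ γ ∈ E, classOp u v γ ψ = 0 := by
  rcases hE with ⟨a, b, c, ⟨hab, hac, hbc⟩, rfl⟩ | ⟨a, b, hab, rfl⟩
  · obtain ⟨i, rfl⟩ := hu.2 a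
    obtain ⟨j, rfl⟩ := hu.2 b
    obtain ⟨k, rfl⟩ := hu.2 c
    convert finsum_classOp_apply_colouredOn_red_eq_zero hu hunit horth hab hac hbc ψ using 3
    ext γ
    simp [colouredOn]
  · obtain ⟨i, rfl⟩ := hu.2 a
    obtain ⟨j, rfl⟩ := hu.2 b
    convert finsum_classOp_apply_colouredOn_green_eq_zero hu hunit horth hab ψ using 3
    ext γ
    simp [colouredOn]

end Enumeration

/-- For any enumeration `u₁, …, u₃₃` of the Peres set, any choice of complexified unit
spanning vectors `vᵢ`, and any initial state `ψ ∈ ℂ³`, the quantal measure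
`μ(A) = ‖Σ_{γ ∈ A} T(γ)ψ‖²` vanishes on every PKS event and on every union of pairwise
disjoint PKS events. -/
theorem stmt13_pks_events_have_measure_zero
    (u : Fin 33 → {L : Submodule ℝ V3 // L ∈ PeresSet}) (hu : Function.Bijective u)
    (v : Fin 33 → EuclideanSpace ℂ (Fin 3))
    (hv : ∀ i : Fin 33, ‖v i‖ = 1 ∧
      ∃ w : V3, w ≠ 0 ∧ (u i).1 = Submodule.span ℝ {w} ∧ ∀ j : Fin 3, v i j = (w j : ℂ))
    (ψ : EuclideanSpace ℂ (Fin 3)) :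
    (∀ E : Set Colouring, IsPKSEvent E → quantalMeasure u v ψ E = 0) ∧
    (∀ 𝓕 : Set (Set Colouring), (∀ E ∈ 𝓕, IsPKSEvent E) → 𝓕.Pairwise Disjoint →
      quantalMeasure u v ψ (⋃₀ 𝓕) = 0) := by
  have horth : ∀ i j, RayOrtho (u i).1 (u j).1 → ⟪v i, v j⟫ = 0 := by
    intro i j h
    obtain ⟨-, w, -, hw, hvw⟩ := hv i
    obtain ⟨-, w', -, hw', hvw'⟩ := hv j
    rw [hw, hw'] at h
    rw [inner_eq_dot3 hvw hvw', h.dot3_eq_zero, Complex.ofReal_zero]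
  have hzero : ∀ E, IsPKSEvent E → ∑ᶠ γ ∈ E, classOp u v γ ψ = 0 := fun E hE =>
    finsum_classOp_apply_eq_zero_of_isPKSEvent hu (fun i => (hv i).1) horth hE ψ
  have : Finite {L : Submodule ℝ V3 // L ∈ PeresSet} := Finite.of_surjective u hu.2
  have : Finite Colouring := inferInstanceAs (Finite (_ → Colour))
  refine ⟨fun E hE => by simp [quantalMeasure, hzero E hE], fun 𝓕 h𝓕 hdisj => ?_⟩
  rw [quantalMeasure, finsum_mem_sUnion hdisj (Set.toFinite 𝓕) fun E _ => Set.toFinite E,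
    finsum_mem_congr rfl fun E hE => hzero E (h𝓕 E hE)]
  simp

end
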